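/- Let G₁ and G₂ be finite simple graphs with n₁, n₂ vertices and m₁, m₂ edges. Then F(G₁ ∨ G₂) = n₂⁴F(G₁) + n₁⁴F(G₂) − F(G₁)F(G₂) + 6n₁n₂²m₂M₁(G₁) + 6n₁²n₂m₁M₁(G₂) + 3n₂F(G₁)M₁(G₂) + 3n₁F(G₂)M₁(G₁) − 6n₂²m₂F(G₁) − 6n₁²m₁F(G₂) − 6n₁n₂M₁(G₁)M₁(G₂), where ∨ is the disjunction. -/

import Mathlib

/-!
The vertices of `G₁ ∨ G₂` not adjacent to `(u, v)`, itself included, are exactly the pairs of a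
vertex not adjacent to `u` in `G₁` and one not adjacent to `v` in `G₂`. Hence, writing
`cᵢ = nᵢ - dᵢ` for these co-degrees, `d(u, v) = n₁ n₂ - c₁(u) c₂(v)`. Expanding the cube,
`F(G₁ ∨ G₂)` splits into products of power sums `(∑ c₁ᵏ) (∑ c₂ᵏ)` for `k ≤ 3`, and each such power
sum is a polynomial in `n`, `m`, `M₁` and `F` (the first one by the handshake lemma).
-/

open Finset

/-- Degree of a vertex: the number of its neighbors. -/
noncomputable def degN {V : Type*} (G : SimpleGraph V) (v : V) : ℕ :=
  Nat.card (G.neighborSet v)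

/-- F-index: the sum of cubes of the vertex degrees. -/
noncomputable def Findex {V : Type*} [Fintype V] (G : SimpleGraph V) : ℕ :=
  ∑ v, (degN G v) ^ 3

/-- First Zagreb index: the sum of squares of the vertex degrees. -/
noncomputable def zagrebM1 {V : Type*} [Fintype V] (G : SimpleGraph V) : ℕ :=
  ∑ v, (degN G v) ^ 2

/-- Number of edges of a graph. -/
noncomputable def numEdges {V : Type*} (G : SimpleGraph V) : ℕ :=
  Nat.card G.edgeSet

/-- Disjunction of two simple graphs. -/
def graphDisjunction {V₁ V₂ : Type*} (G₁ : SimpleGraph V₁) (G₂ : SimpleGraph V₂) :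
    SimpleGraph (V₁ × V₂) where
  Adj x y := x ≠ y ∧ (G₁.Adj x.1 y.1 ∨ G₂.Adj x.2 y.2)
  symm := by
    constructor
    rintro x y ⟨h0, h | h⟩
    · exact ⟨h0.symm, Or.inl h.symm⟩
    · exact ⟨h0.symm, Or.inr h.symm⟩
  loopless := by constructor; rintro x ⟨h0, _⟩; exact h0 rfl


section Degrees

variable {V : Type*} [Fintype V]

lemma degN_eq_degree (G : SimpleGraph V) [DecidableRel G.Adj] (v : V) :
    degN G v = G.degree v := by
  rw [degN, Nat.card_eq_fintype_card, SimpleGraph.card_neighborSet_eq_degree]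

lemma sum_degN (G : SimpleGraph V) : ∑ v, degN G v = 2 * numEdges G := by
  classical
  simp_rw [degN_eq_degree, SimpleGraph.sum_degrees_eq_twice_card_edges, numEdges,
    Nat.card_eq_fintype_card, SimpleGraph.edgeFinset, Set.toFinset_card]

noncomputable def coDegree (G : SimpleGraph V) (v : V) : ℤ :=
  Fintype.card V - degN G v

lemma card_compl_neighborFinset [DecidableEq V] (G : SimpleGraph V) [DecidableRel G.Adj]
    (v : V) : ((G.neighborFinset v)ᶜ.card : ℤ) = coDegree G v := by
  rw [coDegree, degN_eq_degree, ← SimpleGraph.card_neighborFinset_eq_degree,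
    ← (G.neighborFinset v).card_compl_add_card]
  push_cast
  ring

lemma sum_coDegree (G : SimpleGraph V) :
    ∑ v, coDegree G v = (Fintype.card V : ℤ) ^ 2 - 2 * numEdges G := by
  have hsum := congrArg (Nat.cast : ℕ → ℤ) (sum_degN G)
  push_cast at hsum
  simp only [coDegree, sum_sub_distrib, sum_const, card_univ, nsmul_eq_mul, hsum]
  ring

lemma sum_coDegree_sq (G : SimpleGraph V) :
    ∑ v, coDegree G v ^ 2 =
      (Fintype.card V : ℤ) ^ 3 - 4 * Fintype.card V * numEdges G + zagrebM1 G := by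
  have hsum := congrArg (Nat.cast : ℕ → ℤ) (sum_degN G)
  push_cast at hsum
  simp only [coDegree, sub_sq, sum_add_distrib, sum_sub_distrib, sum_const, card_univ,
    nsmul_eq_mul, ← mul_sum, hsum, zagrebM1]
  push_cast
  ring

lemma sum_coDegree_cube (G : SimpleGraph V) :
    ∑ v, coDegree G v ^ 3 = (Fintype.card V : ℤ) ^ 4 - 6 * Fintype.card V ^ 2 * numEdges G
      + 3 * Fintype.card V * zagrebM1 G - Findex G := by
  have hsum := congrArg (Nat.cast : ℕ → ℤ) (sum_degN G)
  push_cast at hsum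
  have sub_cube (a b : ℤ) : (a - b) ^ 3 = a ^ 3 - 3 * a ^ 2 * b + 3 * a * b ^ 2 - b ^ 3 := by
    ring
  simp only [coDegree, sub_cube, sum_add_distrib, sum_sub_distrib, sum_const, card_univ,
    nsmul_eq_mul, ← mul_sum, hsum, zagrebM1, Findex]
  push_cast
  ring

end Degrees

lemma sum_prod_sub_mul_pow_three {ι κ R : Type*} [Fintype ι] [Fintype κ] [CommRing R]
    (c : R) (f : ι → R) (g : κ → R) :
    ∑ p : ι × κ, (c - f p.1 * g p.2) ^ 3 =
      Fintype.card ι * Fintype.card κ * c ^ 3 - 3 * c ^ 2 * (∑ i, f i) * ∑ j, g j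
        + 3 * c * (∑ i, f i ^ 2) * (∑ j, g j ^ 2) - (∑ i, f i ^ 3) * ∑ j, g j ^ 3 := by
  have expand (a b : R) : (c - a * b) ^ 3 =
      c ^ 3 - 3 * c ^ 2 * (a * b) + 3 * c * (a ^ 2 * b ^ 2) - a ^ 3 * b ^ 3 := by
    ring
  simp only [expand, Fintype.sum_prod_type, sum_add_distrib, sum_sub_distrib, sum_const,
    card_univ, nsmul_eq_mul, ← mul_sum, ← sum_mul, Fintype.card_prod, Nat.cast_mul]
  ring

section Disjunction

variable {V₁ V₂ : Type*} (G₁ : SimpleGraph V₁) (G₂ : SimpleGraph V₂)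

lemma graphDisjunction_adj {x y : V₁ × V₂} :
    (graphDisjunction G₁ G₂).Adj x y ↔ G₁.Adj x.1 y.1 ∨ G₂.Adj x.2 y.2 := by
  refine ⟨And.right, fun hadj => ⟨?_, hadj⟩⟩
  rintro rfl
  exact hadj.elim G₁.irrefl G₂.irrefl

variable [Fintype V₁] [Fintype V₂]

lemma compl_neighborFinset_graphDisjunction [DecidableEq V₁] [DecidableEq V₂]
    [DecidableRel G₁.Adj] [DecidableRel G₂.Adj] [DecidableRel (graphDisjunction G₁ G₂).Adj]
    (u : V₁) (v : V₂) :
    ((graphDisjunction G₁ G₂).neighborFinset (u, v))ᶜ =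
      (G₁.neighborFinset u)ᶜ ×ˢ (G₂.neighborFinset v)ᶜ := by
  ext
  simp [graphDisjunction_adj]

lemma degN_graphDisjunction (u : V₁) (v : V₂) :
    (degN (graphDisjunction G₁ G₂) (u, v) : ℤ) =
      Fintype.card V₁ * Fintype.card V₂ - coDegree G₁ u * coDegree G₂ v := by
  classical
  have hcard := congrArg (fun s : Finset (V₁ × V₂) => (#s : ℤ))
    (compl_neighborFinset_graphDisjunction G₁ G₂ u v)
  simp only [card_product, Nat.cast_mul, card_compl_neighborFinset] at hcard
  rw [← hcard, coDegree, Fintype.card_prod, Nat.cast_mul]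
  ring

lemma Findex_graphDisjunction :
    (Findex (graphDisjunction G₁ G₂) : ℤ) = ∑ p : V₁ × V₂,
      ((Fintype.card V₁ * Fintype.card V₂ : ℤ) - coDegree G₁ p.1 * coDegree G₂ p.2) ^ 3 := by
  rw [Findex, Nat.cast_sum]
  refine sum_congr rfl fun p _ => ?_
  rw [Nat.cast_pow, degN_graphDisjunction]

end Disjunction

theorem Findex_disjunction {V₁ V₂ : Type*} [Fintype V₁] [Fintype V₂]
    (G₁ : SimpleGraph V₁) (G₂ : SimpleGraph V₂)
    (n₁ n₂ m₁ m₂ : ℕ) (hn₁ : Fintype.card V₁ = n₁) (hn₂ : Fintype.card V₂ = n₂)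
    (hm₁ : numEdges G₁ = m₁) (hm₂ : numEdges G₂ = m₂) :
    (Findex (graphDisjunction G₁ G₂) : ℤ) =
      (n₂ : ℤ) ^ 4 * Findex G₁ + (n₁ : ℤ) ^ 4 * Findex G₂
        - Findex G₁ * Findex G₂
        + 6 * n₁ * n₂ ^ 2 * m₂ * zagrebM1 G₁ + 6 * n₁ ^ 2 * n₂ * m₁ * zagrebM1 G₂
        + 3 * n₂ * Findex G₁ * zagrebM1 G₂ + 3 * n₁ * Findex G₂ * zagrebM1 G₁
        - 6 * n₂ ^ 2 * m₂ * Findex G₁ - 6 * n₁ ^ 2 * m₁ * Findex G₂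
        - 6 * n₁ * n₂ * zagrebM1 G₁ * zagrebM1 G₂ := by
  subst hn₁ hn₂ hm₁ hm₂
  rw [Findex_graphDisjunction, sum_prod_sub_mul_pow_three, sum_coDegree, sum_coDegree,
    sum_coDegree_sq, sum_coDegree_sq, sum_coDegree_cube, sum_coDegree_cube]
  ring
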